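/- arXiv:2509.09589 — 3 statements merged into one kernel-verified Lean document; each statement's English description precedes it below -/
import Mathlib

section
/- There exist a constant C > 0 and a threshold n₀ ≥ 1, both depending only on A_1, A_2, L, d, α and θ, such that |(1 − m_n^{(n)})·ζ_n·L^{−n(d−θ)} − 1| ≤ C·L^{−nd} for all n ≥ n₀; in particular there exist constants c, C' > 0 depending only on A_1, A_2, L, d, α and θ such that c·L^{−n(θ−α)} ≤ 1 − m_n^{(n)} ≤ C'·L^{−n(θ−α)} for all n ≥ n₀. -/
open MeasureTheory ProbabilityTheory Filter Finset
open scoped ENNReal Classical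

noncomputable section

/-- The hierarchical lattice `H^d_L`: the direct sum of countably many copies of `(ZMod L)^d`. -/
abbrev HLat (d L : ℕ) : Type := ℕ →₀ (Fin d → ZMod L)

/-- `hnorm x = 0` if `x = 0`, and `hnorm x = L^(i+1)` if `x i ≠ 0` and `x j = 0` for `j > i`
(coordinates indexed from `0`, matching the paper's indexing from `1`). -/
def hnorm {d L : ℕ} (x : HLat d L) : ℕ :=
  x.support.sup fun i => L ^ (i + 1)

/-- The ball `Λ_n = {x : ‖x‖ ≤ L^n}`. -/
def Lambda (d L n : ℕ) : Set (HLat d L) := {x | hnorm x ≤ L ^ n}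

/-- The defining equation for `ζ_n`:
`(L^d - 1) · ∑_{i=1}^n L^((i-1)d) exp(-z⁻¹ ρ(L^i)) = L^(nd) - 2`. -/
def zetaEq (d L : ℕ) (ρ : ℝ → ℝ) (n : ℕ) (z : ℝ) : Prop :=
  ((L : ℝ) ^ d - 1) *
      ∑ i ∈ Finset.Icc 1 n, (L : ℝ) ^ ((i - 1) * d) * Real.exp (-z⁻¹ * ρ ((L : ℝ) ^ i))
    = (L : ℝ) ^ (n * d) - 2

/-- `ρ⁻(r) = max{ρ(r) - L^(-nθ), 0}`. -/
def rhoMinus (L : ℕ) (θ : ℝ) (ρ : ℝ → ℝ) (n : ℕ) (r : ℝ) : ℝ :=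
  max (ρ r - (L : ℝ) ^ (-(n : ℝ) * θ)) 0

/-- `p⁻_r = 1 - exp(-ζ_n⁻¹ ρ⁻(r))`. -/
def pMinus (L : ℕ) (θ : ℝ) (ρ : ℝ → ℝ) (ζ : ℕ → ℝ) (n : ℕ) (r : ℝ) : ℝ :=
  1 - Real.exp (-(ζ n)⁻¹ * rhoMinus L θ ρ n r)

/-- `m_j^{(n)} = (L^d - 1) · ∑_{i=1}^j L^((i-1)d) p⁻_{L^i}`. -/
def mjn (d L : ℕ) (θ : ℝ) (ρ : ℝ → ℝ) (ζ : ℕ → ℝ) (n j : ℕ) : ℝ :=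
  ((L : ℝ) ^ d - 1) *
    ∑ i ∈ Finset.Icc 1 j, (L : ℝ) ^ ((i - 1) * d) * pMinus L θ ρ ζ n ((L : ℝ) ^ i)

/-!
The defining equation of `ζ_n` says that the weights `w_i = (L^d - 1) L^{(i-1)d}`, which add up
to `L^{nd} - 1`, satisfy `∑ w_i (1 - exp (-ρ(L^i) / ζ_n)) = 1`. Bounding `1 - e^{-y}` by `y`, and
the last summand alone by `1`, gives `ζ_n ≍ L^{n(d-α)}`. Once `L^{-nθ} ≤ ρ(L^i)` for all `i ≤ n`
(true for large `n` since `θ > α`), the truncation in `ρ⁻` is inactive, `p⁻` factors through the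
exponential, and the same equation gives `1 - m_n^{(n)} = (e^x - 1)(L^{nd} - 2)` with
`x = L^{-nθ} / ζ_n = O(L^{-nd})`. Expanding `e^x - 1 = x (1 + O(x))` yields both claims.
-/

open Real

theorem geom_sum_Icc_pow_mul {R : Type*} [CommRing R] (x : R) (d n : ℕ) :
    (x ^ d - 1) * ∑ i ∈ Icc 1 n, x ^ ((i - 1) * d) = x ^ (n * d) - 1 := by
  induction n with
  | zero => simp
  | succ n ih =>
    rw [sum_Icc_succ_top (by omega), mul_add, ih, Nat.add_sub_cancel, add_mul, one_mul, pow_add]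
    ring

theorem sum_Icc_pow_le {r : ℝ} (hr : 1 < r) (n : ℕ) :
    ∑ i ∈ Icc 1 n, r ^ i ≤ r / (r - 1) * r ^ n := by
  have hr1 : 0 < r - 1 := sub_pos.2 hr
  induction n with
  | zero => rw [Icc_eq_empty (by omega), sum_empty, pow_zero, mul_one]; positivity
  | succ n ih =>
    rw [sum_Icc_succ_top (by omega)]
    calc _ ≤ r / (r - 1) * r ^ n + r ^ (n + 1) := by gcongr
      _ = r / (r - 1) * r ^ (n + 1) := by field_simp; ring

theorem pow_div_four_le_sub_one_mul_pow_sub_one_sub_one {q : ℝ} (hq : 2 ≤ q) {n : ℕ} (hn : 2 ≤ n) :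
    q ^ n / 4 ≤ (q - 1) * q ^ (n - 1) - 1 := by
  obtain ⟨k, rfl⟩ := Nat.exists_eq_add_of_le' hn
  have hP : 2 ≤ q ^ (k + 1) := hq.trans (le_self_pow₀ (by linarith) (by omega))
  rw [show k + 2 - 1 = k + 1 by omega, pow_succ]
  nlinarith

theorem mul_sub_one_le_of_mul_one_sub_exp_neg_le {w y : ℝ} (hw : 0 ≤ w) (hy : 0 ≤ y)
    (h : w * (1 - exp (-y)) ≤ 1) : y * (w - 1) ≤ 1 := by
  have hexp : exp (-y) * (1 + y) ≤ 1 := by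
    calc exp (-y) * (1 + y) ≤ exp (-y) * exp y := by gcongr; linarith [add_one_le_exp y]
      _ = 1 := by rw [← exp_add, neg_add_cancel, exp_zero]
  nlinarith [exp_pos (-y)]

theorem abs_exp_sub_one_div_mul_sub_one_le {x u K : ℝ} (hx0 : 0 < x) (hx1 : x ≤ 1) (hu : 0 ≤ u)
    (hxu : x ≤ K * u) : |(exp x - 1) / x * (1 - 2 * u) - 1| ≤ (K + 4) * u := by
  have hquad := (abs_le.1 (abs_exp_sub_one_sub_id_le (abs_le.2 ⟨by linarith, hx1⟩))).2
  have hv1 : 1 ≤ (exp x - 1) / x := by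
    rw [le_div_iff₀ hx0]; linarith [add_one_le_exp x]
  have hv2 : (exp x - 1) / x ≤ 1 + x := by
    rw [div_le_iff₀ hx0]; nlinarith
  rw [abs_le]
  constructor <;> nlinarith

theorem le_and_le_of_abs_mul_sub_one_le_half {M y s a B : ℝ} (ha : 0 < a) (hs : 0 < s)
    (hlo : a * s ≤ y) (hhi : y ≤ B * s) (h : |M * y - 1| ≤ 1 / 2) :
    (2 * B)⁻¹ * s⁻¹ ≤ M ∧ M ≤ 3 / (2 * a) * s⁻¹ := by
  have hy : 0 < y := lt_of_lt_of_le (by positivity) hlo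
  have hBs : 0 < B * s := hy.trans_le hhi
  obtain ⟨h1, h2⟩ := abs_le.1 h
  have hM : 0 ≤ M := nonneg_of_mul_nonneg_left (by linarith) hy
  constructor
  · calc (2 * B)⁻¹ * s⁻¹ = 1 / 2 / (B * s) := by field_simp
      _ ≤ M * y / (B * s) := by gcongr; linarith
      _ ≤ M * (B * s) / (B * s) := by gcongr
      _ = M := mul_div_cancel_right₀ M hBs.ne'
  · calc M = M * (a * s) / (a * s) := by field_simp
      _ ≤ 3 / 2 / (a * s) := by gcongr; nlinarith
      _ = 3 / (2 * a) * s⁻¹ := by field_simp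

theorem pow_mul_mul_pow_rpow_neg {x : ℝ} (hx : 0 < x) (d i : ℕ) (α : ℝ) :
    x ^ (i * d) * (x ^ i) ^ (-α) = (x ^ ((d : ℝ) - α)) ^ i := by
  rw [← rpow_natCast_mul hx.le, ← rpow_mul_natCast hx.le, ← rpow_natCast, ← rpow_add hx]
  congr 1
  push_cast
  ring

theorem tendsto_rpow_neg_mul_natCast {b β : ℝ} (hb : 1 < b) (hβ : 0 < β) :
    Tendsto (fun n : ℕ => b ^ (-(n : ℝ) * β)) atTop (nhds 0) := by
  have hlt : b ^ (-β) < 1 := rpow_lt_one_of_one_lt_of_neg hb (by linarith)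
  have hpow (n : ℕ) : b ^ (-(n : ℝ) * β) = (b ^ (-β)) ^ n := by
    rw [← rpow_mul_natCast (by linarith), neg_mul, mul_comm, neg_mul]
  simp_rw [hpow]
  exact tendsto_pow_atTop_nhds_zero_of_lt_one (by positivity) hlt

namespace zetaEq

variable {d L n : ℕ} {A1 A2 α : ℝ} {ρ : ℝ → ℝ} {z : ℝ}

theorem weighted_sum_one_sub_exp (h : zetaEq d L ρ n z) :
    ((L : ℝ) ^ d - 1) * ∑ i ∈ Icc 1 n, (L : ℝ) ^ ((i - 1) * d) * (1 - exp (-z⁻¹ * ρ (L ^ i)))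
      = 1 := by
  unfold zetaEq at h
  simp only [mul_sub, mul_one, sum_sub_distrib]
  rw [geom_sum_Icc_pow_mul, h]
  ring

theorem le_weighted_sum (hL : 1 ≤ L) (hz : 0 < z) (h : zetaEq d L ρ n z) :
    z ≤ ((L : ℝ) ^ d - 1) * ∑ i ∈ Icc 1 n, (L : ℝ) ^ ((i - 1) * d) * ρ (L ^ i) := by
  have hq : 0 ≤ (L : ℝ) ^ d - 1 := sub_nonneg.2 (one_le_pow₀ (by exact_mod_cast hL))
  have key : 1 ≤ z⁻¹ * (((L : ℝ) ^ d - 1) * ∑ i ∈ Icc 1 n, (L : ℝ) ^ ((i - 1) * d) * ρ (L ^ i)) :=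
    calc 1 = _ := h.weighted_sum_one_sub_exp.symm
      _ ≤ ((L : ℝ) ^ d - 1) * ∑ i ∈ Icc 1 n, (L : ℝ) ^ ((i - 1) * d) * (z⁻¹ * ρ (L ^ i)) := by
        gcongr with i
        rw [neg_mul]
        linarith [one_sub_le_exp_neg (z⁻¹ * ρ (L ^ i))]
      _ = _ := by simp only [mul_sum]; ring_nf
  rwa [le_inv_mul_iff₀ hz, mul_one] at key

theorem rho_mul_sub_one_le (hL : 1 ≤ L) (hz : 0 < z) (hρ : ∀ r, 0 ≤ r → 0 ≤ ρ r) (hn : 1 ≤ n)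
    (h : zetaEq d L ρ n z) :
    ρ (L ^ n) * (((L : ℝ) ^ d - 1) * (L : ℝ) ^ ((n - 1) * d) - 1) ≤ z := by
  have hq : 0 ≤ (L : ℝ) ^ d - 1 := sub_nonneg.2 (one_le_pow₀ (by exact_mod_cast hL))
  have hy (i : ℕ) : 0 ≤ z⁻¹ * ρ (L ^ i) := mul_nonneg (inv_nonneg.2 hz.le) (hρ _ (by positivity))
  let f (i : ℕ) := ((L : ℝ) ^ d - 1) * ((L : ℝ) ^ ((i - 1) * d) * (1 - exp (-z⁻¹ * ρ (L ^ i))))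
  have hf (i : ℕ) : 0 ≤ f i := by
    have : exp (-z⁻¹ * ρ (L ^ i)) ≤ 1 := exp_le_one_iff.2 (by rw [neg_mul]; linarith [hy i])
    unfold f
    exact mul_nonneg hq (mul_nonneg (by positivity) (by linarith))
  have hlast : ((L : ℝ) ^ d - 1) * (L : ℝ) ^ ((n - 1) * d) * (1 - exp (-(z⁻¹ * ρ (L ^ n)))) ≤ 1 :=
    calc _ = f n := by rw [← neg_mul]; ring
      _ ≤ ∑ i ∈ Icc 1 n, f i := single_le_sum (fun i _ => hf i) (mem_Icc.2 ⟨hn, le_rfl⟩)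
      _ = 1 := by rw [← mul_sum]; exact h.weighted_sum_one_sub_exp
  have := mul_sub_one_le_of_mul_one_sub_exp_neg_le (by positivity) (hy n) hlast
  rwa [mul_assoc, inv_mul_le_iff₀ hz, mul_one] at this

theorem le_mul_pow_of_rho_le (hL : 2 ≤ L) (hαd : α < d) (hρ : ∀ r, 0 ≤ r → 0 ≤ ρ r)
    (hρub : ∀ r, 1 ≤ r → ρ r ≤ A2 * r ^ (-α)) (hz : 0 < z) (h : zetaEq d L ρ n z) :
    z ≤ A2 * ((L : ℝ) ^ ((d : ℝ) - α) / ((L : ℝ) ^ ((d : ℝ) - α) - 1))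
      * ((L : ℝ) ^ ((d : ℝ) - α)) ^ n := by
  have hL1 : (1 : ℝ) < L := by norm_cast
  have hr : 1 < (L : ℝ) ^ ((d : ℝ) - α) := one_lt_rpow hL1 (by linarith)
  have hA2 : 0 ≤ A2 := by simpa using (hρ 1 zero_le_one).trans (hρub 1 le_rfl)
  have hterm (i : ℕ) (hi : i ∈ Icc 1 n) :
      ((L : ℝ) ^ d - 1) * ((L : ℝ) ^ ((i - 1) * d) * ρ (L ^ i))
        ≤ A2 * ((L : ℝ) ^ ((d : ℝ) - α)) ^ i := by
    obtain ⟨j, rfl⟩ := Nat.exists_eq_add_of_le' (mem_Icc.1 hi).1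
    rw [← pow_mul_mul_pow_rpow_neg (by linarith), Nat.add_sub_cancel]
    calc _ = ((L : ℝ) ^ d - 1) * (L : ℝ) ^ (j * d) * ρ (L ^ (j + 1)) := by ring
      _ ≤ (L : ℝ) ^ ((j + 1) * d) * (A2 * ((L : ℝ) ^ (j + 1)) ^ (-α)) := by
        gcongr
        · exact hρ _ (by positivity)
        · rw [add_mul, one_mul, pow_add, mul_comm]
          gcongr
          linarith
        · exact hρub _ (one_le_pow₀ hL1.le)
      _ = _ := by ring
  calc z ≤ _ := h.le_weighted_sum (by omega) hz
    _ ≤ ∑ i ∈ Icc 1 n, A2 * ((L : ℝ) ^ ((d : ℝ) - α)) ^ i := by rw [mul_sum]; exact sum_le_sum hterm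
    _ ≤ _ := by
      rw [← mul_sum, mul_assoc]
      exact mul_le_mul_of_nonneg_left (sum_Icc_pow_le hr n) hA2

theorem mul_pow_le_of_le_rho (hd : 1 ≤ d) (hL : 2 ≤ L) (hρ : ∀ r, 0 ≤ r → 0 ≤ ρ r)
    (hρlb : ∀ r, 1 ≤ r → A1 * r ^ (-α) ≤ ρ r) (hz : 0 < z) (hn : 2 ≤ n)
    (h : zetaEq d L ρ n z) :
    A1 / 4 * ((L : ℝ) ^ ((d : ℝ) - α)) ^ n ≤ z := by
  have hL1 : (1 : ℝ) ≤ L := by norm_cast; omega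
  have hq : (2 : ℝ) ≤ (L : ℝ) ^ d :=
    le_trans (by exact_mod_cast hL) (le_self_pow₀ hL1 (by omega))
  have hweight : (L : ℝ) ^ (n * d) / 4 ≤ ((L : ℝ) ^ d - 1) * (L : ℝ) ^ ((n - 1) * d) - 1 := by
    rw [pow_mul', pow_mul']
    exact pow_div_four_le_sub_one_mul_pow_sub_one_sub_one hq hn
  calc A1 / 4 * ((L : ℝ) ^ ((d : ℝ) - α)) ^ n
      = A1 * ((L : ℝ) ^ n) ^ (-α) * ((L : ℝ) ^ (n * d) / 4) := by
        rw [← pow_mul_mul_pow_rpow_neg (by linarith)]; ring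
    _ ≤ ρ (L ^ n) * (((L : ℝ) ^ d - 1) * (L : ℝ) ^ ((n - 1) * d) - 1) :=
      mul_le_mul (hρlb _ (one_le_pow₀ hL1)) hweight (by positivity) (hρ _ (by positivity))
    _ ≤ z := h.rho_mul_sub_one_le (by omega) hz hρ (by omega)

end zetaEq

section Asymptotics

variable {d L n : ℕ} {A1 α θ : ℝ} {ρ : ℝ → ℝ} {ζ : ℕ → ℝ}

theorem one_sub_mjn_eq (hρθ : ∀ i ∈ Icc 1 n, (L : ℝ) ^ (-(n : ℝ) * θ) ≤ ρ (L ^ i))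
    (h : zetaEq d L ρ n (ζ n)) :
    1 - mjn d L θ ρ ζ n n
      = (exp ((ζ n)⁻¹ * (L : ℝ) ^ (-(n : ℝ) * θ)) - 1) * ((L : ℝ) ^ (n * d) - 2) := by
  set x := (ζ n)⁻¹ * (L : ℝ) ^ (-(n : ℝ) * θ)
  have hp (i : ℕ) (hi : i ∈ Icc 1 n) :
      (L : ℝ) ^ ((i - 1) * d) * pMinus L θ ρ ζ n (L ^ i)
        = (L : ℝ) ^ ((i - 1) * d) * (1 - exp (-(ζ n)⁻¹ * ρ (L ^ i)))
          - (exp x - 1) * ((L : ℝ) ^ ((i - 1) * d) * exp (-(ζ n)⁻¹ * ρ (L ^ i))) := by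
    rw [pMinus, rhoMinus, max_eq_left (sub_nonneg.2 (hρθ i hi)),
      show -(ζ n)⁻¹ * (ρ (L ^ i) - (L : ℝ) ^ (-(n : ℝ) * θ)) = -(ζ n)⁻¹ * ρ (L ^ i) + x by ring,
      exp_add]
    ring
  have h' := h
  unfold zetaEq at h'
  rw [mjn, sum_congr rfl hp, sum_sub_distrib, ← mul_sum, mul_sub, mul_left_comm, h',
    h.weighted_sum_one_sub_exp]
  ring

theorem rpow_neg_mul_le_rho (hL : 1 ≤ L) (hα : 0 ≤ α) (hρlb : ∀ r, 1 ≤ r → A1 * r ^ (-α) ≤ ρ r)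
    (hsmall : (L : ℝ) ^ (-(n : ℝ) * (θ - α)) ≤ A1) {i : ℕ} (hi : i ≤ n) :
    (L : ℝ) ^ (-(n : ℝ) * θ) ≤ ρ (L ^ i) := by
  have hL1 : (1 : ℝ) ≤ L := by exact_mod_cast hL
  calc (L : ℝ) ^ (-(n : ℝ) * θ) = (L : ℝ) ^ (-(n : ℝ) * (θ - α)) * ((L : ℝ) ^ n) ^ (-α) := by
        rw [← rpow_natCast_mul (by positivity), ← rpow_add (by positivity)]
        ring_nf
    _ ≤ A1 * ((L : ℝ) ^ i) ^ (-α) :=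
        mul_le_mul hsmall
          (rpow_le_rpow_of_nonpos (by positivity) (pow_le_pow_right₀ hL1 hi) (by linarith))
          (by positivity) ((rpow_nonneg (by positivity) _).trans hsmall)
    _ ≤ ρ (L ^ i) := hρlb _ (one_le_pow₀ hL1)

theorem abs_scaled_one_sub_mjn_sub_one_le (hL : 1 ≤ L) (hA1 : 0 < A1) (hα : 0 ≤ α) (hθα : α ≤ θ)
    (hρlb : ∀ r, 1 ≤ r → A1 * r ^ (-α) ≤ ρ r) (hζ : 0 < ζ n)
    (hζlb : A1 / 4 * ((L : ℝ) ^ ((d : ℝ) - α)) ^ n ≤ ζ n) (h : zetaEq d L ρ n (ζ n))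
    (hsmall : (L : ℝ) ^ (-(n : ℝ) * (θ - α)) ≤ A1)
    (hsmall' : 4 / A1 * (L : ℝ) ^ (-(n : ℝ) * d) ≤ 1) :
    |(1 - mjn d L θ ρ ζ n n) * ζ n * (L : ℝ) ^ (-(n : ℝ) * ((d : ℝ) - θ)) - 1|
      ≤ (4 / A1 + 4) * (L : ℝ) ^ (-(n : ℝ) * d) := by
  have hL1 : (1 : ℝ) ≤ L := by exact_mod_cast hL
  have hL0 : (0 : ℝ) < L := by linarith
  set t := (L : ℝ) ^ (-(n : ℝ) * θ) with ht_def
  set u := (L : ℝ) ^ (-(n : ℝ) * d) with hu_def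
  have ht : 0 < t := rpow_pos_of_pos hL0 _
  have hu : 0 < u := rpow_pos_of_pos hL0 _
  have hx : (ζ n)⁻¹ * t ≤ 4 / A1 * u := by
    rw [inv_mul_le_iff₀ hζ]
    calc t ≤ ((L : ℝ) ^ ((d : ℝ) - α)) ^ n * u := by
          rw [← rpow_mul_natCast hL0.le, ← rpow_add hL0]
          exact rpow_le_rpow_of_exponent_le hL1 (by nlinarith [(n.cast_nonneg : (0 : ℝ) ≤ n)])
      _ = 4 / A1 * (A1 / 4 * ((L : ℝ) ^ ((d : ℝ) - α)) ^ n) * u := by field_simp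
      _ ≤ 4 / A1 * ζ n * u := by gcongr
      _ = ζ n * (4 / A1 * u) := by ring
  have hLnd : (L : ℝ) ^ (n * d) = u⁻¹ := by
    rw [hu_def, neg_mul, rpow_neg hL0.le, inv_inv, ← Nat.cast_mul, rpow_natCast]
  have hw : (L : ℝ) ^ (-(n : ℝ) * ((d : ℝ) - θ)) = u / t := by
    rw [← rpow_sub hL0]
    ring_nf
  have hscaled : (1 - mjn d L θ ρ ζ n n) * ζ n * (L : ℝ) ^ (-(n : ℝ) * ((d : ℝ) - θ))
      = (exp ((ζ n)⁻¹ * t) - 1) / ((ζ n)⁻¹ * t) * (1 - 2 * u) := by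
    rw [one_sub_mjn_eq (fun i hi => rpow_neg_mul_le_rho hL hα hρlb hsmall (mem_Icc.1 hi).2) h,
      ← ht_def, hLnd, hw]
    field_simp
  rw [hscaled]
  exact abs_exp_sub_one_div_mul_sub_one_le (by positivity) (hx.trans hsmall') hu.le hx

theorem one_sub_mjn_le_and_le {B : ℝ} (hL : 1 ≤ L) (hA1 : 0 < A1)
    (hlo : A1 / 4 * ((L : ℝ) ^ ((d : ℝ) - α)) ^ n ≤ ζ n)
    (hhi : ζ n ≤ B * ((L : ℝ) ^ ((d : ℝ) - α)) ^ n)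
    (h : |(1 - mjn d L θ ρ ζ n n) * ζ n * (L : ℝ) ^ (-(n : ℝ) * ((d : ℝ) - θ)) - 1| ≤ 1 / 2) :
    (2 * B)⁻¹ * (L : ℝ) ^ (-(n : ℝ) * (θ - α)) ≤ 1 - mjn d L θ ρ ζ n n ∧
      1 - mjn d L θ ρ ζ n n ≤ 6 / A1 * (L : ℝ) ^ (-(n : ℝ) * (θ - α)) := by
  have hL0 : (0 : ℝ) < L := by norm_cast
  set w := (L : ℝ) ^ (-(n : ℝ) * ((d : ℝ) - θ))
  have hw : 0 < w := rpow_pos_of_pos hL0 _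
  have hs : (((L : ℝ) ^ ((d : ℝ) - α)) ^ n * w)⁻¹ = (L : ℝ) ^ (-(n : ℝ) * (θ - α)) := by
    rw [← rpow_mul_natCast hL0.le, ← rpow_add hL0, ← rpow_neg hL0.le]
    ring_nf
  have hlo' := mul_le_mul_of_nonneg_right hlo hw.le
  have hhi' := mul_le_mul_of_nonneg_right hhi hw.le
  rw [mul_assoc _ (_ ^ n)] at hlo' hhi'
  rw [mul_assoc] at h
  rw [← hs, show 6 / A1 = 3 / (2 * (A1 / 4)) by field_simp; norm_num]
  exact le_and_le_of_abs_mul_sub_one_le_half (by positivity) (by positivity) hlo' hhi' h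

end Asymptotics

theorem one_minus_m_n_asymptotics_general
    (d L : ℕ) (hd : 1 ≤ d) (hL : 2 ≤ L)
    (A1 A2 α : ℝ) (hA1 : 0 < A1) (hA12 : A1 ≤ A2)
    (hα0 : 0 < α) (hαd : α < (d : ℝ))
    (ρ : ℝ → ℝ)
    (hρnn : ∀ r : ℝ, 0 ≤ r → 0 ≤ ρ r)
    (hρlb : ∀ r : ℝ, 1 ≤ r → A1 * r ^ (-α) ≤ ρ r)
    (hρub : ∀ r : ℝ, 1 ≤ r → ρ r ≤ A2 * r ^ (-α))
    (θ : ℝ) (hθα : α < θ)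
    (ζ : ℕ → ℝ) (hζpos : ∀ n : ℕ, 1 ≤ n → 0 < ζ n)
    (hζeq : ∀ n : ℕ, 1 ≤ n → zetaEq d L ρ n (ζ n))
 :
    ∃ C : ℝ, 0 < C ∧ ∃ n₀ : ℕ, 1 ≤ n₀ ∧
      (∀ n : ℕ, n₀ ≤ n →
        |(1 - mjn d L θ ρ ζ n n) * ζ n * (L : ℝ) ^ (-(n : ℝ) * ((d : ℝ) - θ)) - 1| ≤
          C * (L : ℝ) ^ (-(n : ℝ) * (d : ℝ))) ∧
      ∃ c C' : ℝ, 0 < c ∧ 0 < C' ∧ ∀ n : ℕ, n₀ ≤ n →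
        c * (L : ℝ) ^ (-(n : ℝ) * (θ - α)) ≤ 1 - mjn d L θ ρ ζ n n ∧
        1 - mjn d L θ ρ ζ n n ≤ C' * (L : ℝ) ^ (-(n : ℝ) * (θ - α)) := by
  have hL1 : (1 : ℝ) < L := by norm_cast
  set r := (L : ℝ) ^ ((d : ℝ) - α)
  have hr : 1 < r := one_lt_rpow hL1 (by linarith)
  have hB : 0 < A2 * (r / (r - 1)) := mul_pos (by linarith) (div_pos (by linarith) (by linarith))
  have hsmall := (tendsto_rpow_neg_mul_natCast hL1 (sub_pos.2 hθα)).eventually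
    (eventually_le_nhds hA1)
  have hsmall' := ((tendsto_rpow_neg_mul_natCast hL1 (by linarith : (0 : ℝ) < d)).const_mul
    (4 / A1 + 4)).eventually (eventually_le_nhds (by norm_num : (4 / A1 + 4) * 0 < 1 / 2))
  obtain ⟨N, hN⟩ := eventually_atTop.1 ((eventually_ge_atTop 2).and (hsmall.and hsmall'))
  have hest (n : ℕ) (hn : N ≤ n) := by
    obtain ⟨h2, hsmallθ, hsmalld⟩ := hN n hn
    have hζ := hζpos n (by omega)
    exact abs_scaled_one_sub_mjn_sub_one_le (by omega) hA1 hα0.le hθα.le hρlb hζ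
      ((hζeq n (by omega)).mul_pow_le_of_le_rho hd hL hρnn hρlb hζ h2) (hζeq n (by omega)) hsmallθ
      (by linarith [rpow_pos_of_pos (zero_lt_one.trans hL1) (-(n : ℝ) * d)])
  refine ⟨4 / A1 + 4, by positivity, N, by linarith [(hN N le_rfl).1], hest,
    (2 * (A2 * (r / (r - 1))))⁻¹, 6 / A1, by positivity, by positivity, fun n hn => ?_⟩
  have hn1 : 1 ≤ n := by linarith [(hN n hn).1]
  exact one_sub_mjn_le_and_le (by omega) hA1
    ((hζeq n hn1).mul_pow_le_of_le_rho hd hL hρnn hρlb (hζpos n hn1) (hN n hn).1)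
    ((hζeq n hn1).le_mul_pow_of_rho_le hL hαd hρnn hρub (hζpos n hn1))
    ((hest n hn).trans (hN n hn).2.2)

/-- `1 - m_n^{(n)} = (1 + O(L^{-nd})) ζ_n^{-1} L^{n(d-θ)}`; in particular
`1 - m_n^{(n)} ≍ L^{-n(θ-α)}`. -/
theorem one_minus_m_n_asymptotics
    (d L : ℕ) (hd : 1 ≤ d) (hL : 2 ≤ L)
    (A1 A2 α : ℝ) (hA1 : 0 < A1) (hA12 : A1 ≤ A2)
    (hα0 : 0 < α) (hαd : α < (d : ℝ))
    (ρ : ℝ → ℝ) (hρ0 : ρ 0 = 0)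
    (hρnn : ∀ r : ℝ, 0 ≤ r → 0 ≤ ρ r)
    (hρlb : ∀ r : ℝ, 1 ≤ r → A1 * r ^ (-α) ≤ ρ r)
    (hρub : ∀ r : ℝ, 1 ≤ r → ρ r ≤ A2 * r ^ (-α))
    (θ : ℝ) (hα56 : α < 5 * (d : ℝ) / 6) (hθα : α < θ)
    (hθ1 : α ≤ (d : ℝ) / 2 → θ < 4 * α / 3)
    (hθ2 : (d : ℝ) / 2 < α → α ≤ 2 * (d : ℝ) / 3 → θ < 2 * α - (d : ℝ) / 2)
    (hθ3 : 2 * (d : ℝ) / 3 < α → θ < 5 * α / 2 - (d : ℝ))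
    (ζ : ℕ → ℝ) (hζpos : ∀ n : ℕ, 1 ≤ n → 0 < ζ n)
    (hζeq : ∀ n : ℕ, 1 ≤ n → zetaEq d L ρ n (ζ n))
 :
    ∃ C : ℝ, 0 < C ∧ ∃ n₀ : ℕ, 1 ≤ n₀ ∧
      (∀ n : ℕ, n₀ ≤ n →
        |(1 - mjn d L θ ρ ζ n n) * ζ n * (L : ℝ) ^ (-(n : ℝ) * ((d : ℝ) - θ)) - 1| ≤
          C * (L : ℝ) ^ (-(n : ℝ) * (d : ℝ))) ∧
      ∃ c C' : ℝ, 0 < c ∧ 0 < C' ∧ ∀ n : ℕ, n₀ ≤ n →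
        c * (L : ℝ) ^ (-(n : ℝ) * (θ - α)) ≤ 1 - mjn d L θ ρ ζ n n ∧
        1 - mjn d L θ ρ ζ n n ≤ C' * (L : ℝ) ^ (-(n : ℝ) * (θ - α)) :=
  one_minus_m_n_asymptotics_general d L hd hL A1 A2 α hA1 hA12 hα0 hαd ρ hρnn hρlb hρub θ hθα ζ
    hζpos hζeq

end
end

section
/- There exist a constant C > 0 and a threshold n₀ ≥ 1, both depending only on A_1, A_2, L, d, α and θ, such that m_j^{(n)} ≤ C·ζ_n^{−1}·L^{j(d−α)} for all n ≥ n₀ and all 1 ≤ j ≤ n − 1. -/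
open MeasureTheory ProbabilityTheory Filter Finset
open scoped ENNReal Classical

noncomputable section

/-!
Since `1 - e^{-t} ≤ t` and `ρ⁻(r) ≤ ρ(r) ≤ A₂ r^{-α}`, the `i`-th term of `m_j^{(n)}` is at most
`ζ_n⁻¹ A₂ L^{-d} (L^{d-α})^i`. As `α < d`, the ratio `L^{d-α}` exceeds `1`, so the geometric sum
over `i ≤ j` is dominated by a constant multiple of its last term `L^{j(d-α)}`.
-/

lemma sum_Icc_pow_le_of_one_lt {K : Type*} [Field K] [LinearOrder K] [IsStrictOrderedRing K]
    {r : K} (hr : 1 < r) (j : ℕ) : ∑ i ∈ Icc 1 j, r ^ i ≤ r / (r - 1) * r ^ j := by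
  have hr1 : 0 < r - 1 := sub_pos.2 hr
  calc ∑ i ∈ Icc 1 j, r ^ i ≤ ∑ i ∈ range (j + 1), r ^ i :=
        sum_le_sum_of_subset_of_nonneg
          (fun i hi => by simp only [mem_Icc, mem_range] at hi ⊢; omega)
          (fun i _ _ => by positivity)
    _ = (r ^ (j + 1) - 1) / (r - 1) := geom_sum_eq hr.ne' _
    _ ≤ r ^ (j + 1) / (r - 1) := by gcongr; linarith
    _ = r / (r - 1) * r ^ j := by rw [pow_succ']; ring

lemma pow_pred_mul_mul_rpow_neg {L : ℝ} (hL : 0 < L) (d : ℕ) (α : ℝ) {i : ℕ} (hi : 1 ≤ i) :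
    L ^ ((i - 1) * d) * (L ^ i) ^ (-α) = (L ^ ((d : ℝ) - α)) ^ i / L ^ d := by
  rw [← Real.rpow_natCast L ((i - 1) * d), ← Real.rpow_natCast_mul hL.le,
    ← Real.rpow_mul_natCast hL.le, ← Real.rpow_natCast L d, eq_div_iff (by positivity),
    ← Real.rpow_add hL, ← Real.rpow_add hL]
  push_cast [Nat.cast_sub hi]
  ring_nf

lemma sum_Icc_pow_pred_mul_le {L α K : ℝ} {d : ℕ} (hL : 1 < L) (hαd : α < d) (hK : 0 ≤ K)
    {p : ℕ → ℝ} (hp : ∀ i, 1 ≤ i → p i ≤ K * (L ^ i) ^ (-α)) (j : ℕ) :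
    ∑ i ∈ Icc 1 j, L ^ ((i - 1) * d) * p i ≤
      K / L ^ d * (L ^ ((d : ℝ) - α) / (L ^ ((d : ℝ) - α) - 1)) *
        L ^ ((j : ℝ) * ((d : ℝ) - α)) := by
  have hL0 : 0 < L := by linarith
  set r := L ^ ((d : ℝ) - α)
  have hr : 1 < r := Real.one_lt_rpow hL (sub_pos.2 hαd)
  have hterm : ∀ i ∈ Icc 1 j, L ^ ((i - 1) * d) * p i ≤ K / L ^ d * r ^ i := by
    intro i hi
    have hi1 : 1 ≤ i := (mem_Icc.1 hi).1
    calc L ^ ((i - 1) * d) * p i ≤ L ^ ((i - 1) * d) * (K * (L ^ i) ^ (-α)) := by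
          gcongr; exact hp i hi1
      _ = K / L ^ d * r ^ i := by
          rw [mul_left_comm, pow_pred_mul_mul_rpow_neg hL0 d α hi1]; ring
  calc ∑ i ∈ Icc 1 j, L ^ ((i - 1) * d) * p i ≤ ∑ i ∈ Icc 1 j, K / L ^ d * r ^ i :=
        sum_le_sum hterm
    _ = K / L ^ d * ∑ i ∈ Icc 1 j, r ^ i := (mul_sum ..).symm
    _ ≤ K / L ^ d * (r / (r - 1) * r ^ j) := by gcongr; exact sum_Icc_pow_le_of_one_lt hr j
    _ = K / L ^ d * (r / (r - 1)) * L ^ ((j : ℝ) * ((d : ℝ) - α)) := by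
        rw [mul_comm (j : ℝ), Real.rpow_mul_natCast hL0.le]; ring

lemma rhoMinus_le {L : ℕ} {θ : ℝ} {ρ : ℝ → ℝ} {n : ℕ} {r b : ℝ} (hρ : ρ r ≤ b) (hb : 0 ≤ b) :
    rhoMinus L θ ρ n r ≤ b :=
  max_le (by linarith [Real.rpow_nonneg (Nat.cast_nonneg L) (-(n : ℝ) * θ)]) hb

lemma pMinus_le_inv_mul_rhoMinus (L : ℕ) (θ : ℝ) (ρ : ℝ → ℝ) (ζ : ℕ → ℝ) (n : ℕ) (r : ℝ) :
    pMinus L θ ρ ζ n r ≤ (ζ n)⁻¹ * rhoMinus L θ ρ n r := by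
  have := Real.add_one_le_exp (-((ζ n)⁻¹ * rhoMinus L θ ρ n r))
  rw [pMinus, neg_mul]
  linarith

theorem m_j_n_upper_bound_general
    (d L : ℕ) (hd : 1 ≤ d) (hL : 2 ≤ L)
    (A1 A2 α : ℝ) (hA1 : 0 < A1) (hA12 : A1 ≤ A2)
    (hαd : α < (d : ℝ))
    (ρ : ℝ → ℝ)
    (hρub : ∀ r : ℝ, 1 ≤ r → ρ r ≤ A2 * r ^ (-α))
    (θ : ℝ)
    (ζ : ℕ → ℝ) (hζpos : ∀ n : ℕ, 1 ≤ n → 0 < ζ n)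
 :
    ∃ C : ℝ, 0 < C ∧ ∃ n₀ : ℕ, 1 ≤ n₀ ∧
      ∀ n : ℕ, n₀ ≤ n → ∀ j : ℕ, 1 ≤ j → j ≤ n - 1 →
        mjn d L θ ρ ζ n j ≤ C * (ζ n)⁻¹ * (L : ℝ) ^ ((j : ℝ) * ((d : ℝ) - α)) := by
  have hL1 : (1 : ℝ) < L := by exact_mod_cast hL
  have hLd : (1 : ℝ) < (L : ℝ) ^ d := one_lt_pow₀ hL1 (by omega)
  have hA2 : 0 < A2 := hA1.trans_le hA12
  set r := (L : ℝ) ^ ((d : ℝ) - α)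
  have hr : 1 < r := Real.one_lt_rpow hL1 (sub_pos.2 hαd)
  refine ⟨((L : ℝ) ^ d - 1) * A2 / (L : ℝ) ^ d * (r / (r - 1)), ?_, 1, le_rfl, ?_⟩
  · have : 0 < r - 1 := sub_pos.2 hr
    have : 0 < (L : ℝ) ^ d - 1 := sub_pos.2 hLd
    positivity
  intro n hn j _ _
  have hζ : 0 ≤ (ζ n)⁻¹ := inv_nonneg.2 (hζpos n hn).le
  have hp : ∀ i, 1 ≤ i →
      pMinus L θ ρ ζ n ((L : ℝ) ^ i) ≤ (ζ n)⁻¹ * A2 * ((L : ℝ) ^ i) ^ (-α) := fun i _ => by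
    have hLi : (1 : ℝ) ≤ (L : ℝ) ^ i := one_le_pow₀ hL1.le
    rw [mul_assoc]
    exact (pMinus_le_inv_mul_rhoMinus ..).trans <| mul_le_mul_of_nonneg_left
      (rhoMinus_le (hρub _ hLi) (by positivity)) hζ
  calc mjn d L θ ρ ζ n j ≤ ((L : ℝ) ^ d - 1) * ((ζ n)⁻¹ * A2 / (L : ℝ) ^ d * (r / (r - 1)) *
        (L : ℝ) ^ ((j : ℝ) * ((d : ℝ) - α))) :=
      mul_le_mul_of_nonneg_left (sum_Icc_pow_pred_mul_le hL1 hαd (by positivity) hp j)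
        (sub_pos.2 hLd).le
    _ = _ := by ring

/-- `m_j^{(n)} ≤ C ζ_n^{-1} L^{j(d-α)}` for all `n ≥ n₀` and `1 ≤ j ≤ n-1`. -/
theorem m_j_n_upper_bound
    (d L : ℕ) (hd : 1 ≤ d) (hL : 2 ≤ L)
    (A1 A2 α : ℝ) (hA1 : 0 < A1) (hA12 : A1 ≤ A2)
    (hα0 : 0 < α) (hαd : α < (d : ℝ))
    (ρ : ℝ → ℝ) (hρ0 : ρ 0 = 0)
    (hρnn : ∀ r : ℝ, 0 ≤ r → 0 ≤ ρ r)
    (hρlb : ∀ r : ℝ, 1 ≤ r → A1 * r ^ (-α) ≤ ρ r)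
    (hρub : ∀ r : ℝ, 1 ≤ r → ρ r ≤ A2 * r ^ (-α))
    (θ : ℝ) (hα56 : α < 5 * (d : ℝ) / 6) (hθα : α < θ)
    (hθ1 : α ≤ (d : ℝ) / 2 → θ < 4 * α / 3)
    (hθ2 : (d : ℝ) / 2 < α → α ≤ 2 * (d : ℝ) / 3 → θ < 2 * α - (d : ℝ) / 2)
    (hθ3 : 2 * (d : ℝ) / 3 < α → θ < 5 * α / 2 - (d : ℝ))
    (ζ : ℕ → ℝ) (hζpos : ∀ n : ℕ, 1 ≤ n → 0 < ζ n)
    (hζeq : ∀ n : ℕ, 1 ≤ n → zetaEq d L ρ n (ζ n))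
 :
    ∃ C : ℝ, 0 < C ∧ ∃ n₀ : ℕ, 1 ≤ n₀ ∧
      ∀ n : ℕ, n₀ ≤ n → ∀ j : ℕ, 1 ≤ j → j ≤ n - 1 →
        mjn d L θ ρ ζ n j ≤ C * (ζ n)⁻¹ * (L : ℝ) ^ ((j : ℝ) * ((d : ℝ) - α)) :=
  m_j_n_upper_bound_general d L hd hL A1 A2 α hA1 hA12 hαd ρ hρub θ ζ hζpos
end
end

section
/- There exist a constant c > 0 and a threshold n₀ ≥ 1, both depending only on A_1, A_2, L, d, α and θ, such that for all n ≥ n₀ and all integers k ≥ 1, if V_1, V_2, …, V_k are i.i.d. random variables each distributed as W_1^{(n)}, then P( min_{1≤j≤k} ∑_{i=1}^j (V_i − 1) > −1 ) ≤ P( ∑_{i=1}^k V_i ≥ k ) ≤ exp(−c·k·L^{−2n(θ−α)}). -/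
open MeasureTheory ProbabilityTheory Filter Finset
open scoped ENNReal Classical

noncomputable section

/-!
The running-minimum event forces `∑ V_i ≥ k`, so the content is the Chernoff bound.
`W₁⁽ⁿ⁾` is a sum of independent binomials, so its moment generating function is at most
`exp ((eᵗ - 1) m)` with `m = E W₁⁽ⁿ⁾ = m_n^{(n)}`; for `δ ≤ 1 - m` the choice `t = δ / 4` gives
`P(∑ V_i ≥ k) ≤ exp (-3 k δ² / 16)`. It remains to show `1 - m ≳ L^{-n(θ-α)}`.
The equation for `ζ_n` says precisely that the untruncated probabilities `p_{L^i}` give mean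
offspring `1`, so `1 - m ≥ (L^d - 1) L^{(n-1)d} (p_{L^n} - p⁻_{L^n})`. This top term alone
forces `p_{L^n} ≤ 1/2`, hence `p_{L^n} - p⁻_{L^n} ≥ ζ_n⁻¹ L^{-nθ} / 2` as soon as
`L^{-nθ} ≤ ρ(L^n)`; and comparing the `ζ_n`-equation with `ρ(r) ≤ A₂ r^{-α}` gives
`ζ_n⁻¹ ≳ L^{-n(d-α)}`.
-/

open scoped unitInterval

section Binomial

variable {Ω : Type*} [MeasurableSpace Ω] {P : Measure Ω}

lemma hasLaw_binomial_of_measure_eq {X : Ω → ℕ} {N : ℕ} {p : I} (hX : Measurable X)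
    (h : ∀ k : ℕ, P {ω | X ω = k} = ENNReal.ofReal (N.choose k * p ^ k * (1 - p) ^ (N - k))) :
    HasLaw X (binomial N p) P :=
  ⟨hX.aemeasurable, Measure.ext_of_singleton fun k => by
    rw [Measure.map_apply hX (measurableSet_singleton k), binomial_singleton]
    exact h k⟩

lemma integrable_exp_mul_of_hasLaw_binomial {X : Ω → ℕ} {N : ℕ} {p : I}
    (hX : HasLaw X (binomial N p) P) (t : ℝ) :
    Integrable (fun ω => Real.exp (t * X ω)) P := by
  have h := integrable_binomial (n := N) (p := p) fun k : ℕ => Real.exp (t * k)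
  rw [← hX.map_eq] at h
  exact h.comp_aemeasurable hX.aemeasurable

lemma mgf_of_hasLaw_binomial {X : Ω → ℕ} {N : ℕ} {p : I} (hX : HasLaw X (binomial N p) P)
    (t : ℝ) : mgf (fun ω => (X ω : ℝ)) P t = (p * Real.exp t + (1 - p)) ^ N := by
  rw [mgf, ← integral_map (f := fun k : ℕ => Real.exp (t * k)) hX.aemeasurable
    (by fun_prop), hX.map_eq, integral_binomial, ← Nat.range_succ_eq_Iic, add_pow]
  refine sum_congr rfl fun k _ => ?_
  rw [smul_eq_mul, mul_comm t, Real.exp_nat_mul]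
  ring

lemma mgf_le_exp_of_hasLaw_binomial {X : Ω → ℕ} {N : ℕ} {p : I}
    (hX : HasLaw X (binomial N p) P) (t : ℝ) :
    mgf (fun ω => (X ω : ℝ)) P t ≤ Real.exp (N * (p * (Real.exp t - 1))) := by
  rw [mgf_of_hasLaw_binomial hX, Real.exp_nat_mul]
  have hp0 : (0 : ℝ) ≤ p := unitInterval.nonneg p
  have hp1 : (p : ℝ) ≤ 1 := unitInterval.le_one p
  refine pow_le_pow_left₀ (by nlinarith [Real.exp_pos t]) ?_ N
  linarith [Real.add_one_le_exp (p * (Real.exp t - 1))]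

lemma mgf_sum_le_of_hasLaw_binomial {ι : Type*} {X : ι → Ω → ℕ} (hmeas : ∀ i, Measurable (X i))
    (hindep : iIndepFun X P) {s : Finset ι} {N : ι → ℕ} {p : ι → I}
    (hX : ∀ i ∈ s, HasLaw (X i) (binomial (N i) (p i)) P) (t : ℝ) :
    Integrable (fun ω => Real.exp (t * ∑ i ∈ s, (X i ω : ℝ))) P ∧
      mgf (fun ω => ∑ i ∈ s, (X i ω : ℝ)) P t ≤
        Real.exp ((Real.exp t - 1) * ∑ i ∈ s, N i * (p i : ℝ)) := by
  have := hindep.isProbabilityMeasure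
  set Y : ι → Ω → ℝ := fun i ω => X i ω
  have hYmeas : ∀ i, Measurable (Y i) := fun i => measurable_from_nat.comp (hmeas i)
  have hY : iIndepFun Y P := hindep.comp _ fun _ => measurable_from_nat
  have hsum : (fun ω => ∑ i ∈ s, (X i ω : ℝ)) = ∑ i ∈ s, Y i := (sum_fn s Y).symm
  rw [hsum]
  refine ⟨?_, ?_⟩
  · simpa only [Finset.sum_apply] using hY.integrable_exp_mul_sum hYmeas fun i hi =>
      integrable_exp_mul_of_hasLaw_binomial (hX i hi) t
  calc mgf (∑ i ∈ s, Y i) P t = ∏ i ∈ s, mgf (Y i) P t := hY.mgf_sum hYmeas s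
    _ ≤ ∏ i ∈ s, Real.exp (N i * (p i * (Real.exp t - 1))) :=
      prod_le_prod (fun _ _ => mgf_nonneg) fun i hi => mgf_le_exp_of_hasLaw_binomial (hX i hi) t
    _ = Real.exp ((Real.exp t - 1) * ∑ i ∈ s, N i * (p i : ℝ)) := by
      rw [← Real.exp_sum, mul_sum]
      exact congrArg Real.exp (sum_congr rfl fun i _ => by ring)

end Binomial

section Chernoff

variable {Ω Ω' ι : Type*} [MeasurableSpace Ω] [MeasurableSpace Ω'] {P : Measure Ω}
  {P' : Measure Ω'}

lemma measureReal_le_sum_le_exp_mul_mgf_pow {Y : ι → Ω' → ℝ} {W : Ω → ℝ}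
    (hmeas : ∀ i, Measurable (Y i)) (hindep : iIndepFun Y P')
    (hYW : ∀ i, IdentDistrib (Y i) W P' P) {t : ℝ} (ht : 0 ≤ t)
    (hW : Integrable (fun ω => Real.exp (t * W ω)) P) (s : Finset ι) (a : ℝ) :
    P'.real {ω | a ≤ ∑ i ∈ s, Y i ω} ≤ Real.exp (-t * a) * mgf W P t ^ s.card := by
  have := hindep.isProbabilityMeasure
  have hexp : Measurable fun x : ℝ => Real.exp (t * x) := by fun_prop
  have hint : ∀ i ∈ s, Integrable (fun ω => Real.exp (t * Y i ω)) P' := fun i _ =>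
    ((hYW i).comp hexp).integrable_iff.2 hW
  have hmgf : ∀ i ∈ s, mgf (Y i) P' t = mgf W P t := fun i _ => ((hYW i).comp hexp).integral_eq
  have hchernoff := measure_ge_le_exp_mul_mgf a ht (hindep.integrable_exp_mul_sum hmeas hint)
  rwa [hindep.mgf_sum hmeas, prod_congr rfl hmgf, prod_const, sum_fn] at hchernoff

lemma exp_quarter_sub_one_mul_sub_le {m δ : ℝ} (hδ0 : 0 ≤ δ) (hδ1 : δ ≤ 1) (hm : m ≤ 1 - δ) :
    (Real.exp (δ / 4) - 1) * m - δ / 4 ≤ -(3 / 16) * δ ^ 2 := by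
  have hquad := (abs_le.1 (Real.abs_exp_sub_one_sub_id_le (x := δ / 4)
    (by rw [abs_of_nonneg (by positivity)]; linarith))).2
  have hpos : 0 ≤ Real.exp (δ / 4) - 1 := by linarith [Real.add_one_le_exp (δ / 4)]
  nlinarith [mul_le_mul_of_nonneg_left hm hpos]

lemma measure_card_le_sum_le_exp {V : ι → Ω' → ℕ} {W : Ω → ℕ} (hV : ∀ i, Measurable (V i))
    (hW : Measurable W) (hindep : iIndepFun V P') (hVW : ∀ i, P'.map (V i) = P.map W)
    {m δ : ℝ} (hδ0 : 0 ≤ δ) (hδ1 : δ ≤ 1) (hm : m ≤ 1 - δ)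
    (hmgf : ∀ t, Integrable (fun ω => Real.exp (t * W ω)) P ∧
      mgf (fun ω => (W ω : ℝ)) P t ≤ Real.exp ((Real.exp t - 1) * m)) (s : Finset ι) :
    P' {ω | s.card ≤ ∑ i ∈ s, V i ω} ≤
      ENNReal.ofReal (Real.exp (-(3 / 16) * s.card * δ ^ 2)) := by
  have := hindep.isProbabilityMeasure
  have hYW : ∀ i, IdentDistrib (fun ω => (V i ω : ℝ)) (fun ω => (W ω : ℝ)) P' P := fun i =>
    (IdentDistrib.mk (hV i).aemeasurable hW.aemeasurable (hVW i)).comp measurable_from_nat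
  have hchernoff := measureReal_le_sum_le_exp_mul_mgf_pow (fun i => measurable_from_nat.comp (hV i))
    (hindep.comp _ fun _ => measurable_from_nat) hYW (by positivity) (hmgf (δ / 4)).1 s s.card
  have hcast : {ω | s.card ≤ ∑ i ∈ s, V i ω} = {ω | (s.card : ℝ) ≤ ∑ i ∈ s, (V i ω : ℝ)} := by
    ext ω
    simp [← Nat.cast_sum]
  rw [hcast, ENNReal.le_ofReal_iff_toReal_le (measure_ne_top _ _) (Real.exp_nonneg _),
    ← measureReal_def]
  calc _ ≤ Real.exp (-(δ / 4) * s.card) * mgf (fun ω => (W ω : ℝ)) P (δ / 4) ^ s.card := hchernoff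
    _ ≤ Real.exp (-(δ / 4) * s.card) * Real.exp ((Real.exp (δ / 4) - 1) * m) ^ s.card := by
      gcongr
      exacts [mgf_nonneg, (hmgf (δ / 4)).2]
    _ = Real.exp (s.card * ((Real.exp (δ / 4) - 1) * m - δ / 4)) := by
      rw [← Real.exp_nat_mul, ← Real.exp_add]
      ring_nf
    _ ≤ Real.exp (-(3 / 16) * s.card * δ ^ 2) := by
      have := exp_quarter_sub_one_mul_sub_le hδ0 hδ1 hm
      refine Real.exp_le_exp.2 ?_
      nlinarith [(Nat.cast_nonneg s.card : (0 : ℝ) ≤ s.card)]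

end Chernoff

lemma card_le_sum_of_neg_one_lt_sum_sub_one {ι : Type*} (s : Finset ι) (v : ι → ℕ)
    (h : (-1 : ℤ) < ∑ i ∈ s, ((v i : ℤ) - 1)) : s.card ≤ ∑ i ∈ s, v i := by
  rw [sum_sub_distrib, sum_const, nsmul_one] at h
  have : (s.card : ℤ) ≤ ∑ i ∈ s, (v i : ℤ) := by omega
  exact_mod_cast this

lemma mul_sum_Icc_pow_sub_one {R : Type*} [CommRing R] (x : R) (n : ℕ) :
    (x - 1) * ∑ i ∈ Icc 1 n, x ^ (i - 1) = x ^ n - 1 := by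
  rw [← Ico_add_one_right_eq_Icc, sum_Ico_eq_sum_range, mul_comm]
  simpa using geom_sum_mul x n

/-- The paper's `p_r = 1 - exp(-ζ_n⁻¹ ρ(r))`; `pMinus` is the same with `ρ` replaced by `ρ⁻`. -/
def connProb (ρ : ℝ → ℝ) (z r : ℝ) : ℝ := 1 - Real.exp (-z⁻¹ * ρ r)

section ConnProb

variable {f g : ℝ → ℝ} {z r : ℝ}

lemma connProb_nonneg (hz : 0 ≤ z) (hf : 0 ≤ f r) : 0 ≤ connProb f z r := by
  have : Real.exp (-z⁻¹ * f r) ≤ 1 :=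
    Real.exp_le_one_iff.2 (by nlinarith [inv_nonneg.2 hz])
  rw [connProb]
  linarith

lemma connProb_le_one : connProb f z r ≤ 1 := by
  rw [connProb]
  linarith [Real.exp_pos (-z⁻¹ * f r)]

lemma connProb_le_mul : connProb f z r ≤ z⁻¹ * f r := by
  rw [connProb]
  linarith [Real.add_one_le_exp (-z⁻¹ * f r)]

lemma connProb_le_connProb (hz : 0 ≤ z) (hfg : f r ≤ g r) : connProb f z r ≤ connProb g z r := by
  rw [connProb, connProb]
  have := Real.exp_le_exp.2 (mul_le_mul_of_nonpos_left hfg (neg_nonpos.2 (inv_nonneg.2 hz)))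
  linarith

lemma exp_mul_le_connProb_sub_connProb :
    Real.exp (-z⁻¹ * g r) * (z⁻¹ * (g r - f r)) ≤ connProb g z r - connProb f z r := by
  have hsplit : Real.exp (-z⁻¹ * f r) = Real.exp (-z⁻¹ * g r) * Real.exp (z⁻¹ * (g r - f r)) := by
    rw [← Real.exp_add]
    ring_nf
  rw [connProb, connProb, hsplit]
  nlinarith [Real.add_one_le_exp (z⁻¹ * (g r - f r)), Real.exp_pos (-z⁻¹ * g r)]

end ConnProb

lemma pMinus_eq_connProb (L : ℕ) (θ : ℝ) (ρ : ℝ → ℝ) (ζ : ℕ → ℝ) (n : ℕ) (r : ℝ) :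
    pMinus L θ ρ ζ n r = connProb (rhoMinus L θ ρ n) (ζ n) r := rfl

section ZetaEq

variable {d L n : ℕ} {ρ : ℝ → ℝ} {z : ℝ}

lemma zetaEq.sum_connProb_eq_one (h : zetaEq d L ρ n z) :
    ((L : ℝ) ^ d - 1) * ∑ i ∈ Icc 1 n, (L : ℝ) ^ ((i - 1) * d) * connProb ρ z ((L : ℝ) ^ i)
      = 1 := by
  have hgeom : ((L : ℝ) ^ d - 1) * ∑ i ∈ Icc 1 n, (L : ℝ) ^ ((i - 1) * d)
      = (L : ℝ) ^ (n * d) - 1 := by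
    have := mul_sum_Icc_pow_sub_one ((L : ℝ) ^ d) n
    simp only [← pow_mul] at this
    rwa [mul_comm d n, sum_congr rfl fun i _ => by rw [mul_comm d (i - 1)]] at this
  rw [zetaEq] at h
  simp only [connProb, mul_one, sum_sub_distrib, mul_sub] at h ⊢
  linarith

lemma zetaEq.connProb_le_half (h : zetaEq d L ρ n z) (hz : 0 ≤ z)
    (hρ : ∀ r, 1 ≤ r → 0 ≤ ρ r) (hd : 1 ≤ d) (hL : 2 ≤ L) (hn : 2 ≤ n) :
    connProb ρ z ((L : ℝ) ^ n) ≤ 1 / 2 := by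
  have hL1 : (1 : ℝ) ≤ L := Nat.one_le_cast.2 (by omega)
  have hp : ∀ i, 0 ≤ connProb ρ z ((L : ℝ) ^ i) := fun i =>
    connProb_nonneg hz (hρ _ (one_le_pow₀ hL1))
  have hterm : ((L : ℝ) ^ d - 1) * ((L : ℝ) ^ ((n - 1) * d) * connProb ρ z ((L : ℝ) ^ n)) ≤ 1 := by
    refine le_trans ?_ h.sum_connProb_eq_one.le
    have hmem : n ∈ Icc 1 n := mem_Icc.2 ⟨by omega, le_rfl⟩
    refine mul_le_mul_of_nonneg_left (single_le_sum
      (f := fun i => (L : ℝ) ^ ((i - 1) * d) * connProb ρ z ((L : ℝ) ^ i))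
      (fun i _ => mul_nonneg (by positivity) (hp i)) hmem) (sub_nonneg.2 (one_le_pow₀ hL1))
  have hL2 : (2 : ℝ) ≤ L := Nat.ofNat_le_cast.2 hL
  have hLd : 1 ≤ (L : ℝ) ^ d - 1 := by linarith [le_self_pow₀ hL1 (by omega : d ≠ 0)]
  have hLnd : (2 : ℝ) ≤ (L : ℝ) ^ ((n - 1) * d) :=
    hL2.trans (le_self_pow₀ hL1 (Nat.mul_ne_zero (by omega) (by omega)))
  have := mul_le_mul hLd (mul_le_mul_of_nonneg_right hLnd (hp n))
    (mul_nonneg zero_le_two (hp n)) (by linarith)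
  linarith

lemma zetaEq.one_le_inv_mul_pow {α A2 : ℝ} (h : zetaEq d L ρ n z) (hz : 0 ≤ z) (hA2 : 0 ≤ A2)
    (hL : 1 < L) (hαd : α < d) (hρub : ∀ r, 1 ≤ r → ρ r ≤ A2 * r ^ (-α)) :
    1 ≤ z⁻¹ * (A2 * (L : ℝ) ^ ((d : ℝ) - α) / ((L : ℝ) ^ ((d : ℝ) - α) - 1) *
      ((L : ℝ) ^ ((d : ℝ) - α)) ^ n) := by
  set ℓ : ℝ := (L : ℝ)
  set q := ℓ ^ ((d : ℝ) - α)
  have hℓ : 1 < ℓ := Nat.one_lt_cast.2 hL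
  have hq : 1 < q := Real.one_lt_rpow hℓ (by linarith)
  have hterm : ∀ i ∈ Icc 1 n,
      (ℓ ^ d - 1) * (ℓ ^ ((i - 1) * d) * connProb ρ z (ℓ ^ i)) ≤ z⁻¹ * A2 * q ^ i := by
    intro i hi
    obtain ⟨j, rfl⟩ : ∃ j, i = j + 1 := ⟨i - 1, by have := (mem_Icc.1 hi).1; omega⟩
    have hpow : (ℓ ^ d - 1) * ℓ ^ ((j + 1 - 1) * d) ≤ ℓ ^ ((j + 1) * d) := by
      rw [Nat.add_sub_cancel, add_mul, one_mul, pow_add]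
      nlinarith [pow_pos (zero_lt_one.trans hℓ) (j * d)]
    have hqi : ℓ ^ ((j + 1) * d) * (ℓ ^ (j + 1)) ^ (-α) = q ^ (j + 1) := by
      rw [mul_comm (j + 1) d, pow_mul', ← Real.rpow_natCast (ℓ ^ (j + 1)) d,
        ← Real.rpow_add (by positivity), Real.rpow_pow_comm (by positivity), ← sub_eq_add_neg]
    have hp : connProb ρ z (ℓ ^ (j + 1)) ≤ z⁻¹ * (A2 * (ℓ ^ (j + 1)) ^ (-α)) :=
      connProb_le_mul.trans (mul_le_mul_of_nonneg_left (hρub _ (one_le_pow₀ hℓ.le))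
        (inv_nonneg.2 hz))
    calc (ℓ ^ d - 1) * (ℓ ^ ((j + 1 - 1) * d) * connProb ρ z (ℓ ^ (j + 1)))
        = (ℓ ^ d - 1) * ℓ ^ ((j + 1 - 1) * d) * connProb ρ z (ℓ ^ (j + 1)) := by ring
      _ ≤ (ℓ ^ d - 1) * ℓ ^ ((j + 1 - 1) * d) * (z⁻¹ * (A2 * (ℓ ^ (j + 1)) ^ (-α))) :=
        mul_le_mul_of_nonneg_left hp
          (mul_nonneg (sub_nonneg.2 (one_le_pow₀ hℓ.le)) (by positivity))
      _ ≤ ℓ ^ ((j + 1) * d) * (z⁻¹ * (A2 * (ℓ ^ (j + 1)) ^ (-α))) :=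
        mul_le_mul_of_nonneg_right hpow (by positivity)
      _ = z⁻¹ * A2 * q ^ (j + 1) := by rw [← hqi]; ring
  have hgeom : ∑ i ∈ Icc 1 n, q ^ i ≤ q / (q - 1) * q ^ n := by
    have hshift : ∑ i ∈ Icc 1 n, q ^ i = q * ∑ i ∈ Icc 1 n, q ^ (i - 1) := by
      rw [mul_sum]
      exact sum_congr rfl fun i hi => (mul_pow_sub_one (by have := (mem_Icc.1 hi).1; omega) q).symm
    have := mul_sum_Icc_pow_sub_one q n
    rw [div_mul_eq_mul_div, le_div_iff₀ (by linarith), hshift]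
    nlinarith
  calc 1 = (ℓ ^ d - 1) * ∑ i ∈ Icc 1 n, ℓ ^ ((i - 1) * d) * connProb ρ z (ℓ ^ i) :=
        h.sum_connProb_eq_one.symm
    _ ≤ ∑ i ∈ Icc 1 n, z⁻¹ * A2 * q ^ i := by rw [mul_sum]; exact sum_le_sum hterm
    _ ≤ z⁻¹ * A2 * (q / (q - 1) * q ^ n) := by
      rw [← mul_sum]; exact mul_le_mul_of_nonneg_left hgeom (by positivity)
    _ = z⁻¹ * (A2 * q / (q - 1) * q ^ n) := by ring

lemma zetaEq.le_one_sub_mjn {θ : ℝ} {ζ : ℕ → ℝ} (h : zetaEq d L ρ n (ζ n)) (hζ : 0 ≤ ζ n)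
    (hρ : ∀ r, 1 ≤ r → 0 ≤ ρ r) (hL : 1 ≤ L) (hn : 1 ≤ n) :
    ((L : ℝ) ^ d - 1) * ((L : ℝ) ^ ((n - 1) * d) *
      (connProb ρ (ζ n) ((L : ℝ) ^ n) - pMinus L θ ρ ζ n ((L : ℝ) ^ n)))
      ≤ 1 - mjn d L θ ρ ζ n n := by
  have hL1 : (1 : ℝ) ≤ L := by exact_mod_cast hL
  have hτ : 0 ≤ (L : ℝ) ^ (-(n : ℝ) * θ) := Real.rpow_nonneg (zero_le_one.trans hL1) _
  have hle : ∀ i : ℕ, pMinus L θ ρ ζ n ((L : ℝ) ^ i) ≤ connProb ρ (ζ n) ((L : ℝ) ^ i) :=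
    fun i => connProb_le_connProb hζ (max_le (by linarith) (hρ _ (one_le_pow₀ hL1)))
  have hgap : 1 - mjn d L θ ρ ζ n n = ((L : ℝ) ^ d - 1) * ∑ i ∈ Icc 1 n, (L : ℝ) ^ ((i - 1) * d) *
      (connProb ρ (ζ n) ((L : ℝ) ^ i) - pMinus L θ ρ ζ n ((L : ℝ) ^ i)) := by
    have := h.sum_connProb_eq_one
    simp only [mjn, mul_sub, sum_sub_distrib]
    linarith
  have hmem : n ∈ Icc 1 n := mem_Icc.2 ⟨hn, le_rfl⟩
  rw [hgap]
  exact mul_le_mul_of_nonneg_left (single_le_sum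
    (f := fun i => (L : ℝ) ^ ((i - 1) * d) *
      (connProb ρ (ζ n) ((L : ℝ) ^ i) - pMinus L θ ρ ζ n ((L : ℝ) ^ i)))
    (fun i _ => mul_nonneg (by positivity) (sub_nonneg.2 (hle i))) hmem)
    (sub_nonneg.2 (one_le_pow₀ hL1))

lemma zetaEq.mul_rpow_le_one_sub_mjn {α θ A2 : ℝ} {ζ : ℕ → ℝ} (h : zetaEq d L ρ n (ζ n))
    (hζ : 0 ≤ ζ n) (hd : 1 ≤ d) (hL : 2 ≤ L) (hn : 2 ≤ n) (hA2 : 0 < A2) (hαd : α < d)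
    (hρ : ∀ r, 1 ≤ r → 0 ≤ ρ r) (hρub : ∀ r, 1 ≤ r → ρ r ≤ A2 * r ^ (-α))
    (hτ : (L : ℝ) ^ (-(n : ℝ) * θ) ≤ ρ ((L : ℝ) ^ n)) :
    ((L : ℝ) ^ ((d : ℝ) - α) - 1) / (4 * A2 * (L : ℝ) ^ ((d : ℝ) - α)) *
      (L : ℝ) ^ (-(n : ℝ) * (θ - α)) ≤ 1 - mjn d L θ ρ ζ n n := by
  set ℓ : ℝ := (L : ℝ)
  set q := ℓ ^ ((d : ℝ) - α) with hqdef
  set u := (ζ n)⁻¹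
  set τ := ℓ ^ (-(n : ℝ) * θ) with hτdef
  have hℓ : 1 < ℓ := Nat.one_lt_cast.2 (by omega)
  have hℓ0 : 0 < ℓ := zero_lt_one.trans hℓ
  have hq : 1 < q := Real.one_lt_rpow hℓ (by linarith)
  have hu : (q - 1) / (A2 * q) * (q ^ n)⁻¹ ≤ u := by
    have hK : 0 < A2 * q / (q - 1) * q ^ n := by
      have : 0 < q - 1 := by linarith
      positivity
    calc (q - 1) / (A2 * q) * (q ^ n)⁻¹ = 1 / (A2 * q / (q - 1) * q ^ n) := by
          field_simp
      _ ≤ u := (div_le_iff₀ hK).2 (h.one_le_inv_mul_pow hζ hA2.le (by omega) hαd hρub)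
  have hhalf : 1 / 2 ≤ Real.exp (-u * ρ (ℓ ^ n)) := by
    have := h.connProb_le_half hζ hρ hd hL hn
    rw [connProb] at this
    linarith
  have hdiff : 1 / 2 * (u * τ) ≤ connProb ρ (ζ n) (ℓ ^ n) - pMinus L θ ρ ζ n (ℓ ^ n) := by
    have hρm : rhoMinus L θ ρ n (ℓ ^ n) = ρ (ℓ ^ n) - τ := max_eq_left (sub_nonneg.2 hτ)
    have := exp_mul_le_connProb_sub_connProb (f := rhoMinus L θ ρ n) (g := ρ) (z := ζ n)
      (r := ℓ ^ n)
    rw [hρm, sub_sub_cancel] at this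
    rw [pMinus_eq_connProb]
    exact le_trans (mul_le_mul_of_nonneg_right hhalf (by positivity)) this
  have hLd : ℓ ^ (n * d) / 2 ≤ (ℓ ^ d - 1) * ℓ ^ ((n - 1) * d) := by
    have h2 : 2 ≤ ℓ ^ d := by
      calc (2 : ℝ) ≤ ℓ := Nat.ofNat_le_cast.2 hL
        _ ≤ ℓ ^ d := le_self_pow₀ hℓ.le (by omega)
    obtain ⟨m, rfl⟩ : ∃ m, n = m + 1 := ⟨n - 1, by omega⟩
    rw [Nat.add_sub_cancel, add_mul, one_mul, pow_add]
    nlinarith [pow_pos hℓ0 (m * d)]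
  have hpow : ℓ ^ (n * d) * τ * (q ^ n)⁻¹ = ℓ ^ (-(n : ℝ) * (θ - α)) := by
    rw [hτdef, hqdef, ← Real.rpow_natCast ℓ, ← Real.rpow_natCast (ℓ ^ _), ← Real.rpow_mul hℓ0.le,
      ← Real.rpow_neg hℓ0.le, ← Real.rpow_add hℓ0, ← Real.rpow_add hℓ0]
    congr 1
    push_cast
    ring
  calc (q - 1) / (4 * A2 * q) * ℓ ^ (-(n : ℝ) * (θ - α))
      = ℓ ^ (n * d) / 2 * (1 / 2 * ((q - 1) / (A2 * q) * (q ^ n)⁻¹ * τ)) := by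
        rw [← hpow]
        ring
    _ ≤ (ℓ ^ d - 1) * ℓ ^ ((n - 1) * d) * (1 / 2 * (u * τ)) := by
        have : 0 < q - 1 := by linarith
        gcongr
        exact (by positivity : (0 : ℝ) ≤ ℓ ^ (n * d) / 2).trans hLd
    _ ≤ (ℓ ^ d - 1) * (ℓ ^ ((n - 1) * d) *
          (connProb ρ (ζ n) (ℓ ^ n) - pMinus L θ ρ ζ n (ℓ ^ n))) := by
        rw [mul_assoc]
        gcongr
        exact sub_nonneg.2 (one_le_pow₀ hℓ.le)
    _ ≤ 1 - mjn d L θ ρ ζ n n := h.le_one_sub_mjn hζ hρ (by omega) (by omega)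

end ZetaEq

section Mean

variable {d L n : ℕ} {θ : ℝ} {ρ : ℝ → ℝ} {ζ : ℕ → ℝ}

lemma mjn_nonneg (hL : 1 ≤ L) (hζ : 0 ≤ ζ n) (j : ℕ) : 0 ≤ mjn d L θ ρ ζ n j :=
  mul_nonneg (sub_nonneg.2 (one_le_pow₀ (Nat.one_le_cast.2 hL)))
    (sum_nonneg fun _ _ => mul_nonneg (by positivity) (connProb_nonneg hζ (le_max_right _ _)))

lemma sum_mul_pMinus_eq_mjn (hL : 1 ≤ L) (j : ℕ) :
    ∑ i ∈ Icc 1 j, ((L ^ (i * d) - L ^ ((i - 1) * d) : ℕ) : ℝ) * pMinus L θ ρ ζ n ((L : ℝ) ^ i)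
      = mjn d L θ ρ ζ n j := by
  rw [mjn, mul_sum]
  refine sum_congr rfl fun i hi => ?_
  obtain ⟨m, rfl⟩ : ∃ m, i = m + 1 := ⟨i - 1, by have := (mem_Icc.1 hi).1; omega⟩
  have hle : L ^ (m * d) ≤ L ^ ((m + 1) * d) := Nat.pow_le_pow_right hL (by nlinarith)
  rw [Nat.add_sub_cancel, Nat.cast_sub hle, add_mul, one_mul, pow_add]
  push_cast
  ring

lemma mgf_sum_le_exp_mjn (hL : 1 ≤ L) (hζ : 0 ≤ ζ n) {Ω : Type*} [MeasurableSpace Ω]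
    {P : Measure Ω} {X : ℕ → Ω → ℕ} (hXmeas : ∀ i, Measurable (X i)) (hXindep : iIndepFun X P)
    (hXdist : ∀ i : ℕ, 1 ≤ i → i ≤ n → ∀ k : ℕ,
      P {ω | X i ω = k} =
        ENNReal.ofReal (((L ^ (i * d) - L ^ ((i - 1) * d)).choose k : ℝ) *
          pMinus L θ ρ ζ n ((L : ℝ) ^ i) ^ k *
          (1 - pMinus L θ ρ ζ n ((L : ℝ) ^ i)) ^ (L ^ (i * d) - L ^ ((i - 1) * d) - k)))
    (t : ℝ) :
    Integrable (fun ω => Real.exp (t * ((∑ j ∈ Icc 1 n, X j ω : ℕ) : ℝ))) P ∧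
      mgf (fun ω => ((∑ j ∈ Icc 1 n, X j ω : ℕ) : ℝ)) P t ≤
        Real.exp ((Real.exp t - 1) * mjn d L θ ρ ζ n n) := by
  have hp : ∀ i, pMinus L θ ρ ζ n ((L : ℝ) ^ i) ∈ I := fun i =>
    ⟨connProb_nonneg hζ (le_max_right _ _), connProb_le_one⟩
  have hlaw : ∀ i ∈ Icc 1 n, HasLaw (X i)
      (binomial (L ^ (i * d) - L ^ ((i - 1) * d)) ⟨_, hp i⟩) P := fun i hi =>
    hasLaw_binomial_of_measure_eq (hXmeas i) (hXdist i (mem_Icc.1 hi).1 (mem_Icc.1 hi).2)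
  rw [← sum_mul_pMinus_eq_mjn hL]
  simpa only [Nat.cast_sum] using mgf_sum_le_of_hasLaw_binomial hXmeas hXindep hlaw t

end Mean

lemma eventually_rpow_neg_mul_le {L : ℕ} {α θ A1 : ℝ} (hL : 1 < L) (hA1 : 0 < A1)
    (hθα : α < θ) : ∀ᶠ n : ℕ in atTop, (L : ℝ) ^ (-(n : ℝ) * θ) ≤ A1 * ((L : ℝ) ^ n) ^ (-α) := by
  have hℓ : (1 : ℝ) < L := Nat.one_lt_cast.2 hL
  have hℓ0 : (0 : ℝ) < L := zero_lt_one.trans hℓ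
  have hr : 1 < (L : ℝ) ^ (θ - α) := Real.one_lt_rpow hℓ (by linarith)
  filter_upwards [(tendsto_pow_atTop_atTop_of_one_lt hr).eventually_ge_atTop A1⁻¹] with n hn
  have hsplit : ((L : ℝ) ^ n) ^ (-α) = ((L : ℝ) ^ (θ - α)) ^ n * (L : ℝ) ^ (-(n : ℝ) * θ) := by
    rw [← Real.rpow_natCast, ← Real.rpow_natCast, ← Real.rpow_mul hℓ0.le, ← Real.rpow_mul hℓ0.le,
      ← Real.rpow_add hℓ0]
    congr 1
    ring
  rw [hsplit, ← mul_assoc]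
  refine le_mul_of_one_le_left (by positivity) ?_
  rwa [← inv_le_iff_one_le_mul₀' hA1]

lemma eventually_mul_rpow_le_one_sub_mjn {d L : ℕ} {A1 A2 α θ : ℝ} {ρ : ℝ → ℝ} {ζ : ℕ → ℝ}
    (hd : 1 ≤ d) (hL : 2 ≤ L) (hA1 : 0 < A1) (hA12 : A1 ≤ A2) (hαd : α < d) (hθα : α < θ)
    (hρlb : ∀ r : ℝ, 1 ≤ r → A1 * r ^ (-α) ≤ ρ r)
    (hρub : ∀ r : ℝ, 1 ≤ r → ρ r ≤ A2 * r ^ (-α))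
    (hζpos : ∀ n : ℕ, 1 ≤ n → 0 < ζ n) (hζeq : ∀ n : ℕ, 1 ≤ n → zetaEq d L ρ n (ζ n)) :
    ∃ c : ℝ, 0 < c ∧ ∀ᶠ n : ℕ in atTop, 0 ≤ mjn d L θ ρ ζ n n ∧
      c * (L : ℝ) ^ (-(n : ℝ) * (θ - α)) ≤ 1 - mjn d L θ ρ ζ n n := by
  have hρ : ∀ r, 1 ≤ r → 0 ≤ ρ r := fun r hr =>
    (mul_nonneg hA1.le (Real.rpow_nonneg (zero_le_one.trans hr) _)).trans (hρlb r hr)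
  have hA2 : 0 < A2 := hA1.trans_le hA12
  have hq : 1 < (L : ℝ) ^ ((d : ℝ) - α) := Real.one_lt_rpow (Nat.one_lt_cast.2 hL) (by linarith)
  refine ⟨((L : ℝ) ^ ((d : ℝ) - α) - 1) / (4 * A2 * (L : ℝ) ^ ((d : ℝ) - α)),
    div_pos (by linarith) (by positivity), ?_⟩
  filter_upwards [eventually_rpow_neg_mul_le hL hA1 hθα, eventually_ge_atTop 2] with n hτ hn
  have hζ := (hζpos n (by omega)).le
  exact ⟨mjn_nonneg (by omega) hζ n, (hζeq n (by omega)).mul_rpow_le_one_sub_mjn hζ hd hL hn hA2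
    hαd hρ hρub (hτ.trans (hρlb _ (one_le_pow₀ (Nat.one_le_cast.2 (by omega)))))⟩

theorem total_progeny_tail_bound_general
    (d L : ℕ) (hd : 1 ≤ d) (hL : 2 ≤ L)
    (A1 A2 α : ℝ) (hA1 : 0 < A1) (hA12 : A1 ≤ A2)
    (hαd : α < (d : ℝ))
    (ρ : ℝ → ℝ)
    (hρlb : ∀ r : ℝ, 1 ≤ r → A1 * r ^ (-α) ≤ ρ r)
    (hρub : ∀ r : ℝ, 1 ≤ r → ρ r ≤ A2 * r ^ (-α))
    (θ : ℝ) (hθα : α < θ)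
    (ζ : ℕ → ℝ) (hζpos : ∀ n : ℕ, 1 ≤ n → 0 < ζ n)
    (hζeq : ∀ n : ℕ, 1 ≤ n → zetaEq d L ρ n (ζ n))
    {Ω : Type} [MeasurableSpace Ω] (P : Measure Ω)
    (X : ℕ → ℕ → Ω → ℕ)
    (hXmeas : ∀ n i, Measurable (X n i))
    (hXindep : ∀ n : ℕ, iIndepFun (X n) P)
    (hXdist : ∀ n i : ℕ, 1 ≤ i → i ≤ n → ∀ k : ℕ,
      P {ω | X n i ω = k} =
        ENNReal.ofReal (((L ^ (i * d) - L ^ ((i - 1) * d)).choose k : ℝ) *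
          pMinus L θ ρ ζ n ((L : ℝ) ^ i) ^ k *
          (1 - pMinus L θ ρ ζ n ((L : ℝ) ^ i)) ^ (L ^ (i * d) - L ^ ((i - 1) * d) - k)))
 :
    ∃ c : ℝ, 0 < c ∧ ∃ n₀ : ℕ, 1 ≤ n₀ ∧
      ∀ n : ℕ, n₀ ≤ n → ∀ k : ℕ, 1 ≤ k →
      ∀ (Ω' : Type) [MeasurableSpace Ω'] (P' : Measure Ω'), IsProbabilityMeasure P' →
      ∀ V : ℕ → Ω' → ℕ, (∀ i, Measurable (V i)) →
        iIndepFun V P' →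
        (∀ i : ℕ, Measure.map (V i) P' =
          Measure.map (fun ω => ∑ j ∈ Finset.Icc 1 n, X n j ω) P) →
        P' {ω | ∀ j ∈ Finset.Icc 1 k, (-1 : ℤ) < ∑ i ∈ Finset.Icc 1 j, ((V i ω : ℤ) - 1)} ≤
            P' {ω | k ≤ ∑ i ∈ Finset.Icc 1 k, V i ω} ∧
          P' {ω | k ≤ ∑ i ∈ Finset.Icc 1 k, V i ω} ≤
            ENNReal.ofReal (Real.exp (-c * (k : ℝ) * (L : ℝ) ^ (-(2 * (n : ℝ)) * (θ - α)))) := by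
  obtain ⟨c, hc, hgap⟩ :=
    eventually_mul_rpow_le_one_sub_mjn hd hL hA1 hA12 hαd hθα hρlb hρub hζpos hζeq
  obtain ⟨n₀, hn₀⟩ := eventually_atTop.1 (hgap.and (eventually_ge_atTop 1))
  refine ⟨3 / 16 * c ^ 2, by positivity, max n₀ 1, le_max_right _ _,
    fun n hn k hk Ω' _ P' _ V hVmeas hVindep hVdist => ⟨?_, ?_⟩⟩
  · refine measure_mono fun ω hω => ?_
    simpa using card_le_sum_of_neg_one_lt_sum_sub_one (Icc 1 k) (V · ω)
      (hω k (mem_Icc.2 ⟨hk, le_rfl⟩))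
  obtain ⟨⟨hm0, hm⟩, hn1⟩ := hn₀ n (le_of_max_le_left hn)
  set E := (L : ℝ) ^ (-(n : ℝ) * (θ - α))
  have hE2 : (L : ℝ) ^ (-(2 * (n : ℝ)) * (θ - α)) = E ^ 2 := by
    rw [← Real.rpow_natCast, ← Real.rpow_mul (by positivity)]
    congr 1
    push_cast
    ring
  have htail := measure_card_le_sum_le_exp (δ := c * E) hVmeas
    (measurable_sum _ fun j _ => hXmeas n j) hVindep hVdist (by positivity) (by linarith)
    (by linarith)
    (mgf_sum_le_exp_mjn (by omega) (hζpos n hn1).le (hXmeas n) (hXindep n) (hXdist n)) (Icc 1 k)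
  rw [Nat.card_Icc, add_tsub_cancel_right] at htail
  rwa [hE2,
    show -(3 / 16 * c ^ 2) * (k : ℝ) * E ^ 2 = -(3 / 16) * k * (c * E) ^ 2 by ring]

/-- For i.i.d. copies `V₁, …, V_k` of `W₁^{(n)}`, the probability that the
random walk with steps `V_i - 1` stays above `-1` up to time `k` is at most
`P(∑_{i=1}^k V_i ≥ k) ≤ exp(-c k L^{-2n(θ-α)})`. -/
theorem total_progeny_tail_bound
    (d L : ℕ) (hd : 1 ≤ d) (hL : 2 ≤ L)
    (A1 A2 α : ℝ) (hA1 : 0 < A1) (hA12 : A1 ≤ A2)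
    (hα0 : 0 < α) (hαd : α < (d : ℝ))
    (ρ : ℝ → ℝ) (hρ0 : ρ 0 = 0)
    (hρnn : ∀ r : ℝ, 0 ≤ r → 0 ≤ ρ r)
    (hρlb : ∀ r : ℝ, 1 ≤ r → A1 * r ^ (-α) ≤ ρ r)
    (hρub : ∀ r : ℝ, 1 ≤ r → ρ r ≤ A2 * r ^ (-α))
    (θ : ℝ) (hα56 : α < 5 * (d : ℝ) / 6) (hθα : α < θ)
    (hθ1 : α ≤ (d : ℝ) / 2 → θ < 4 * α / 3)
    (hθ2 : (d : ℝ) / 2 < α → α ≤ 2 * (d : ℝ) / 3 → θ < 2 * α - (d : ℝ) / 2)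
    (hθ3 : 2 * (d : ℝ) / 3 < α → θ < 5 * α / 2 - (d : ℝ))
    (ζ : ℕ → ℝ) (hζpos : ∀ n : ℕ, 1 ≤ n → 0 < ζ n)
    (hζeq : ∀ n : ℕ, 1 ≤ n → zetaEq d L ρ n (ζ n))
    {Ω : Type} [MeasurableSpace Ω] (P : Measure Ω) [IsProbabilityMeasure P]
    (X : ℕ → ℕ → Ω → ℕ)
    (hXmeas : ∀ n i, Measurable (X n i))
    (hXindep : ∀ n : ℕ, iIndepFun (X n) P)
    (hXdist : ∀ n i : ℕ, 1 ≤ i → i ≤ n → ∀ k : ℕ,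
      P {ω | X n i ω = k} =
        ENNReal.ofReal (((L ^ (i * d) - L ^ ((i - 1) * d)).choose k : ℝ) *
          pMinus L θ ρ ζ n ((L : ℝ) ^ i) ^ k *
          (1 - pMinus L θ ρ ζ n ((L : ℝ) ^ i)) ^ (L ^ (i * d) - L ^ ((i - 1) * d) - k)))
 :
    ∃ c : ℝ, 0 < c ∧ ∃ n₀ : ℕ, 1 ≤ n₀ ∧
      ∀ n : ℕ, n₀ ≤ n → ∀ k : ℕ, 1 ≤ k →
      ∀ (Ω' : Type) [MeasurableSpace Ω'] (P' : Measure Ω'), IsProbabilityMeasure P' →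
      ∀ V : ℕ → Ω' → ℕ, (∀ i, Measurable (V i)) →
        iIndepFun V P' →
        (∀ i : ℕ, Measure.map (V i) P' =
          Measure.map (fun ω => ∑ j ∈ Finset.Icc 1 n, X n j ω) P) →
        P' {ω | ∀ j ∈ Finset.Icc 1 k, (-1 : ℤ) < ∑ i ∈ Finset.Icc 1 j, ((V i ω : ℤ) - 1)} ≤
            P' {ω | k ≤ ∑ i ∈ Finset.Icc 1 k, V i ω} ∧
          P' {ω | k ≤ ∑ i ∈ Finset.Icc 1 k, V i ω} ≤
            ENNReal.ofReal (Real.exp (-c * (k : ℝ) * (L : ℝ) ^ (-(2 * (n : ℝ)) * (θ - α)))) :=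
  total_progeny_tail_bound_general d L hd hL A1 A2 α hA1 hA12 hαd ρ hρlb hρub θ hθα ζ hζpos hζeq P X
    hXmeas hXindep hXdist
end
end
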